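/- Let K be a category with countable products and pullbacks, F : K ⥤ K an endofunctor with a right adjoint R, and O an object of K. Then the category F-Mre of F-Moore machines with output O has all finite products (in particular a terminal object and binary products). -/

import Mathlib

open CategoryTheory Limits

universe w w' v u

/-- An `F`-Moore machine with output `O`: a carrier `E` with maps `d : F E ⟶ E`
and `s : E ⟶ O`. -/
structure FMoore {K : Type u} [Category.{v} K] (F : K ⥤ K) (O : K) : Type max u v where
  E : K
  d : F.obj E ⟶ E
  s : E ⟶ O

namespace FMoore

variable {K : Type u} [Category.{v} K] {F : K ⥤ K} {O : K}

/-- A morphism of `F`-Moore machines. -/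
@[ext]
structure Hom (M N : FMoore F O) : Type v where
  f : M.E ⟶ N.E
  hd : M.d ≫ f = F.map f ≫ N.d
  hs : M.s = f ≫ N.s

instance : Category (FMoore F O) where
  Hom := Hom
  id M := ⟨𝟙 M.E, by simp, by simp⟩
  comp u v := ⟨u.f ≫ v.f, by
      rw [F.map_comp, Category.assoc, ← v.hd, ← Category.assoc, u.hd, Category.assoc], by
      rw [Category.assoc, ← v.hs, u.hs]⟩
  id_comp u := Hom.ext (Category.id_comp u.f)
  comp_id u := Hom.ext (Category.comp_id u.f)
  assoc u v w := Hom.ext (Category.assoc u.f v.f w.f)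

/-- The forgetful functor sending a machine `(E, d, s)` to its carrier `E`. -/
def forget (F : K ⥤ K) (O : K) : FMoore F O ⥤ K where
  obj M := M.E
  map u := u.f

end FMoore

/-!
Transposing along `F ⊣ R`, a machine is a map `E ⟶ R E` together with an output `E ⟶ O`.
The object `∏ₙ Rⁿ O` of output streams with the shift map is then a terminal machine:
the unique map into it sends a state to the outputs it produces after `n` steps. Since `R`
preserves pullbacks, pullbacks of machines are computed on carriers, and binary products are
pullbacks over the terminal machine.
-/

namespace FMoore

variable {K : Type u} [Category.{v} K] {F : K ⥤ K} {O : K}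

@[ext]
lemma hom_ext {M N : FMoore F O} {u v : M ⟶ N} (h : u.f = v.f) : u = v := Hom.ext h

section Transpose

variable {R : K ⥤ K} (adj : F ⊣ R)

noncomputable def transpose (M : FMoore F O) : M.E ⟶ R.obj M.E := adj.homEquiv _ _ M.d

lemma d_comp_eq_iff (M N : FMoore F O) (f : M.E ⟶ N.E) :
    M.d ≫ f = F.map f ≫ N.d ↔ transpose adj M ≫ R.map f = f ≫ transpose adj N := by
  rw [transpose, transpose, ← Adjunction.homEquiv_naturality_right,
    ← Adjunction.homEquiv_naturality_left, (adj.homEquiv _ _).apply_eq_iff_eq]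

lemma transpose_comp_map {M N : FMoore F O} (u : M ⟶ N) :
    transpose adj M ≫ R.map u.f = u.f ≫ transpose adj N :=
  (d_comp_eq_iff adj M N u.f).mp u.hd

noncomputable abbrev ofTranspose {E : K} (e : E ⟶ R.obj E) (s : E ⟶ O) : FMoore F O :=
  ⟨E, (adj.homEquiv _ _).symm e, s⟩

@[simp]
lemma transpose_ofTranspose {E : K} (e : E ⟶ R.obj E) (s : E ⟶ O) :
    transpose adj (ofTranspose adj e s) = e :=
  (adj.homEquiv _ _).apply_symm_apply e

def homOfTranspose {M N : FMoore F O} (f : M.E ⟶ N.E)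
    (hd : transpose adj M ≫ R.map f = f ≫ transpose adj N) (hs : M.s = f ≫ N.s) : M ⟶ N :=
  ⟨f, (d_comp_eq_iff adj M N f).mpr hd, hs⟩

end Transpose

abbrev iterObj (R : K ⥤ K) (O : K) : ℕ → K
  | 0 => O
  | n + 1 => R.obj (iterObj R O n)

section Terminal

variable {R : K ⥤ K} (adj : F ⊣ R) [HasProductsOfShape ℕ K]

noncomputable abbrev final : FMoore F O :=
  haveI := adj.isRightAdjoint
  ofTranspose adj
    (Pi.lift (f := fun n => R.obj (iterObj R O n)) (fun n => Pi.π (iterObj R O) (n + 1)) ≫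
      inv (piComparison R (iterObj R O)))
    (Pi.π (iterObj R O) 0)

lemma transpose_final_comp_map_π (n : ℕ) :
    transpose adj (final adj : FMoore F O) ≫ R.map (Pi.π (iterObj R O) n) =
      Pi.π (iterObj R O) (n + 1) := by
  have := adj.isRightAdjoint
  rw [transpose_ofTranspose]
  simp

noncomputable def behaviourComponent (M : FMoore F O) : ∀ n, M.E ⟶ iterObj R O n
  | 0 => M.s
  | n + 1 => transpose adj M ≫ R.map (behaviourComponent M n)

lemma hom_final_f_comp_π {M : FMoore F O} (u : M ⟶ (final adj : FMoore F O)) (n : ℕ) :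
    u.f ≫ Pi.π (iterObj R O) n = behaviourComponent adj M n := by
  induction n with
  | zero => exact u.hs.symm
  | succ n ih =>
    rw [behaviourComponent, ← ih, R.map_comp, ← Category.assoc, transpose_comp_map,
      Category.assoc, transpose_final_comp_map_π]

noncomputable def behaviour (M : FMoore F O) : M ⟶ (final adj : FMoore F O) :=
  homOfTranspose adj (Pi.lift (behaviourComponent adj M))
    (by
      have := adj.isRightAdjoint
      refine (cancel_mono (piComparison R (iterObj R O))).mp (Pi.hom_ext _ _ fun n => ?_)
      simp only [Category.assoc, piComparison_comp_π, ← R.map_comp, Pi.lift_π,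
        transpose_final_comp_map_π]
      rfl)
    (Pi.lift_π (behaviourComponent adj M) 0).symm

noncomputable def isTerminalFinal : IsTerminal (final adj : FMoore F O) :=
  IsTerminal.ofUniqueHom (behaviour adj) fun M u =>
    hom_ext (Pi.hom_ext _ _ fun n => by
      rw [hom_final_f_comp_π, hom_final_f_comp_π])

end Terminal

theorem hasTerminal_of_adjunction {R : K ⥤ K} (adj : F ⊣ R) [HasProductsOfShape ℕ K] :
    HasTerminal (FMoore F O) :=
  (isTerminalFinal adj).hasTerminal

section Pullback

variable {R : K ⥤ K} (adj : F ⊣ R) [HasPullbacks K] {M N P : FMoore F O}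
  (f : M ⟶ P) (g : N ⟶ P)

noncomputable abbrev pullbackMachine : FMoore F O :=
  haveI := adj.isRightAdjoint
  ofTranspose adj
    (pullback.lift (pullback.fst f.f g.f ≫ transpose adj M)
        (pullback.snd f.f g.f ≫ transpose adj N)
        (by simp only [Category.assoc, transpose_comp_map, pullback.condition_assoc]) ≫
      (PreservesPullback.iso R f.f g.f).inv)
    (pullback.fst f.f g.f ≫ M.s)

lemma transpose_pullbackMachine_comp_map_fst :
    transpose adj (pullbackMachine adj f g) ≫ R.map (pullback.fst f.f g.f) =
      pullback.fst f.f g.f ≫ transpose adj M := by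
  have := adj.isRightAdjoint
  rw [transpose_ofTranspose, Category.assoc, PreservesPullback.iso_inv_fst]
  exact pullback.lift_fst _ _ _

lemma transpose_pullbackMachine_comp_map_snd :
    transpose adj (pullbackMachine adj f g) ≫ R.map (pullback.snd f.f g.f) =
      pullback.snd f.f g.f ≫ transpose adj N := by
  have := adj.isRightAdjoint
  rw [transpose_ofTranspose, Category.assoc, PreservesPullback.iso_inv_snd]
  exact pullback.lift_snd _ _ _

noncomputable def pullbackFst : pullbackMachine adj f g ⟶ M :=
  homOfTranspose adj (pullback.fst f.f g.f) (transpose_pullbackMachine_comp_map_fst adj f g) rfl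

noncomputable def pullbackSnd : pullbackMachine adj f g ⟶ N :=
  homOfTranspose adj (pullback.snd f.f g.f) (transpose_pullbackMachine_comp_map_snd adj f g)
    (by show _ ≫ M.s = _; rw [f.hs, g.hs, pullback.condition_assoc])

noncomputable def pullbackLift {Q : FMoore F O} (u : Q ⟶ M) (v : Q ⟶ N)
    (w : u ≫ f = v ≫ g) : Q ⟶ pullbackMachine adj f g :=
  haveI := adj.isRightAdjoint
  homOfTranspose adj (pullback.lift u.f v.f (congrArg Hom.f w))
    ((cancel_mono (PreservesPullback.iso R f.f g.f).hom).mp (pullback.hom_ext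
      (by simp only [Category.assoc, PreservesPullback.iso_hom_fst, ← R.map_comp,
        pullback.lift_fst, transpose_comp_map, transpose_pullbackMachine_comp_map_fst,
        pullback.lift_fst_assoc])
      (by simp only [Category.assoc, PreservesPullback.iso_hom_snd, ← R.map_comp,
        pullback.lift_snd, transpose_comp_map, transpose_pullbackMachine_comp_map_snd,
        pullback.lift_snd_assoc])))
    (by rw [pullback.lift_fst_assoc, u.hs])

noncomputable def pullbackMachineIsLimit :
    IsLimit (PullbackCone.mk (pullbackFst adj f g) (pullbackSnd adj f g)
      (hom_ext pullback.condition)) :=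
  PullbackCone.IsLimit.mk _ (fun c => pullbackLift adj f g c.fst c.snd c.condition)
    (fun _ => hom_ext (pullback.lift_fst _ _ _)) (fun _ => hom_ext (pullback.lift_snd _ _ _))
    (fun _ _ hfst hsnd => hom_ext (pullback.hom_ext
      ((congrArg Hom.f hfst).trans (pullback.lift_fst _ _ _).symm)
      ((congrArg Hom.f hsnd).trans (pullback.lift_snd _ _ _).symm)))

end Pullback

theorem hasPullbacks_of_adjunction {R : K ⥤ K} (adj : F ⊣ R) [HasPullbacks K] :
    HasPullbacks (FMoore F O) :=
  @hasPullbacks_of_hasLimit_cospan _ _ fun {_ _ _ f g} =>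
    ⟨⟨⟨_, pullbackMachineIsLimit adj f g⟩⟩⟩

end FMoore

/-- If `K` has countable products and pullbacks and `F ⊣ R`, then the category of
`F`-Moore machines with output `O` has all finite products. -/
theorem fMoore_hasFiniteProducts
    {K : Type u} [Category.{v} K] [HasCountableProducts K] [HasPullbacks K]
    (F : K ⥤ K) (R : K ⥤ K) (adj : F ⊣ R) (O : K) :
    HasFiniteProducts (FMoore F O) := by
  have := FMoore.hasTerminal_of_adjunction (O := O) adj
  have := FMoore.hasPullbacks_of_adjunction (O := O) adj
  have := hasBinaryProducts_of_hasTerminal_and_pullbacks (FMoore F O)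
  exact hasFiniteProducts_of_has_binary_and_terminal
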